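/- Let S₁ = {2345, 1345, 1245, 1235, 1234}, S₂ = {2346, 1346, 1246, 1236, 1234}, S₃ = {2356, 1356, 1256, 1236, 1235} (the 3-faces of the 4-simplices 12345, 12346, 12356; note S₁∩S₂ = {1234}, S₁∩S₃ = {1235}, S₂∩S₃ = {1236}), and S = S₁ ∪ S₂ ∪ S₃ (twelve tetrahedra). Let W₁ ∈ Λ(S₁), W₂ ∈ Λ(S₂), W₃ ∈ Λ(S₃), each even or odd. Let d₁ = Σ_{s∈S₁}(β¹_s ∂_s + γ¹_s x_s), d₂ = Σ_{s∈S₂}(β²_s ∂_s + γ²_s x_s), d₃ = Σ_{s∈S₃}(β³_s ∂_s + γ³_s x_s) satisfy d₁W₁ = 0, d₂W₂ = 0, d₃W₃ = 0 and the agreement conditions β¹_{1234} = β²_{1234}, γ¹_{1234} = −γ²_{1234}; β¹_{1235} = β³_{1235}, γ¹_{1235} = −γ³_{1235}; β²_{1236} = β³_{1236}, γ²_{1236} = −γ³_{1236}. Let d = Σ over the nine boundary tetrahedra s ∈ S ∖ {1234, 1235, 1236} of (β_s ∂_s + γ_s x_s), where for each such s the coefficients are those of the unique dᵢ with s ∈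 Sᵢ. Then d(W₁W₂W₃) = −(β¹_{1234} ∂_{1234} + β¹_{1235} ∂_{1235} + β²_{1236} ∂_{1236})(W₁W₂W₃), and consequently d(∂_{1236}(∂_{1235}(∂_{1234}(W₁W₂W₃)))) = 0, i.e. the composed operator d annihilates the triple Berezin integral of W₁W₂W₃ over the three inner variables. -/
import Mathlib


noncomputable section

/-- The Grassmann (exterior) algebra `Λ(ℂ^S)` on generators indexed by `S`. -/
abbrev GS (S : Type) [Fintype S] [DecidableEq S] := ExteriorAlgebra ℂ (S → ℂ)

/-- `x_s` : left exterior multiplication by the generator `e_s`. -/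
def XopS (S : Type) [Fintype S] [DecidableEq S] (s : S) : GS S →ₗ[ℂ] GS S :=
  LinearMap.mulLeft ℂ (ExteriorAlgebra.ι ℂ (Pi.single s 1))

/-- `∂_s` : left interior multiplication (contraction) with the dual basis vector of `e_s`. -/
def DopS (S : Type) [Fintype S] [DecidableEq S] (s : S) : GS S →ₗ[ℂ] GS S :=
  CliffordAlgebra.contractLeft (LinearMap.proj s)

/-- `Λ(T)` : the subalgebra of `Λ(ℂ^S)` generated by the `e_s` with `s ∈ T`. -/
def GSub (S : Type) [Fintype S] [DecidableEq S] (T : Finset S) : Subalgebra ℂ (GS S) :=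
  Algebra.adjoin ℂ ((fun s => ExteriorAlgebra.ι ℂ (Pi.single s 1)) '' ↑T)

/-- An element of `Λ(ℂ^S)` is even or odd, i.e. a sum of monomials of even degree or
a sum of monomials of odd degree. -/
def IsEvenOrOdd (S : Type) [Fintype S] [DecidableEq S] (w : GS S) : Prop :=
  w ∈ CliffordAlgebra.evenOdd (0 : QuadraticForm ℂ (S → ℂ)) 0 ∨
  w ∈ CliffordAlgebra.evenOdd (0 : QuadraticForm ℂ (S → ℂ)) 1
/- Vertices 1,…,6 are encoded as `0,…,5 : Fin 6`; a tetrahedron (3-face) is the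
4-element subset of its vertices, so e.g. `1234` is `{0,1,2,3} : Finset (Fin 6)`. -/

namespace Pach33

open CliffordAlgebra

variable {S : Type} [Fintype S] [DecidableEq S]

lemma XopS_apply (s : S) (a : GS S) :
    XopS S s a = CliffordAlgebra.ι (0 : QuadraticForm ℂ (S → ℂ)) (Pi.single s 1) * a := rfl

lemma DopS_eq (s : S) :
    DopS S s = contractLeft (Q := (0 : QuadraticForm ℂ (S → ℂ))) (LinearMap.proj s) := rfl

lemma iota_mul_comm (m : S → ℂ) (x : GS S) :
    CliffordAlgebra.ι (0 : QuadraticForm ℂ (S → ℂ)) m * x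
      = involute x * CliffordAlgebra.ι (0 : QuadraticForm ℂ (S → ℂ)) m := by
  induction x using CliffordAlgebra.induction with
  | algebraMap r => simp [Algebra.commutes]
  | ι v =>
      rw [involute_ι, neg_mul]
      exact eq_neg_of_add_eq_zero_left (by simpa using ι_mul_ι_add_swap_of_isOrtho (Q := (0 : QuadraticForm ℂ (S → ℂ))) (QuadraticMap.IsOrtho.all m v))
  | mul a b ha hb => rw [← mul_assoc, ha, mul_assoc, hb, ← mul_assoc, map_mul]
  | add a b ha hb => rw [mul_add, ha, hb, map_add, add_mul]

lemma contract_mul (φ : Module.Dual ℂ (S → ℂ)) (x : GS S) : ∀ y : GS S,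
    contractLeft (Q := (0 : QuadraticForm ℂ (S → ℂ))) φ (x * y)
      = contractLeft φ x * y + involute x * contractLeft φ y := by
  induction x using CliffordAlgebra.induction with
  | algebraMap r =>
      intro y
      rw [contractLeft_algebraMap_mul, contractLeft_algebraMap, zero_mul, zero_add,
        AlgHom.commutes]
  | ι v =>
      intro y
      rw [contractLeft_ι_mul, contractLeft_ι, involute_ι, neg_mul, ← Algebra.smul_def,
        sub_eq_add_neg]
  | mul a b ha hb =>
      intro y
      rw [mul_assoc, ha, hb, ha, map_mul]
      noncomm_ring
  | add a b ha hb =>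
      intro y
      simp only [add_mul, map_add, ha, hb, LinearMap.map_add]
      abel

lemma Dop_mul (s : S) (x y : GS S) :
    DopS S s (x * y) = DopS S s x * y + involute x * DopS S s y :=
  contract_mul (LinearMap.proj s) x y

lemma Dop_Dop (s t : S) (a : GS S) :
    DopS S s (DopS S t a) = -(DopS S t (DopS S s a)) := by
  rw [DopS_eq s, DopS_eq t]
  exact contractLeft_comm _ _ a

lemma Dop_Dop_self (t : S) (a : GS S) : DopS S t (DopS S t a) = 0 := by
  rw [DopS_eq t]
  exact contractLeft_contractLeft _ a

lemma Dop_Xop (s t : S) (h : s ≠ t) (a : GS S) :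
    XopS S s (DopS S t a) = -(DopS S t (XopS S s a)) := by
  have h1 : DopS S t (XopS S s a)
      = (LinearMap.proj t : (S → ℂ) →ₗ[ℂ] ℂ) (Pi.single s 1) • a
        - CliffordAlgebra.ι (0 : QuadraticForm ℂ (S → ℂ)) (Pi.single s 1) * DopS S t a := by
    rw [XopS_apply, DopS_eq t, contractLeft_ι_mul]
  have h2 : (LinearMap.proj t : (S → ℂ) →ₗ[ℂ] ℂ) (Pi.single s (1 : ℂ)) = 0 :=
    Pi.single_eq_of_ne (Ne.symm h) 1
  rw [XopS_apply, h1, h2, zero_smul, zero_sub, neg_neg]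

lemma Dop_support {T : Finset S} {w : GS S} (hw : w ∈ GSub S T) {s : S} (hs : s ∉ T) :
    DopS S s w = 0 := by
  induction hw using Algebra.adjoin_induction with
  | mem x hx =>
      obtain ⟨t, ht, rfl⟩ := hx
      have hst : s ≠ t := fun h => hs (by rw [h]; exact ht)
      show contractLeft (Q := (0 : QuadraticForm ℂ (S → ℂ))) (LinearMap.proj s)
        (CliffordAlgebra.ι _ (Pi.single t 1)) = 0
      rw [contractLeft_ι]
      have h0 : (LinearMap.proj s : (S → ℂ) →ₗ[ℂ] ℂ) (Pi.single t (1 : ℂ)) = 0 :=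
        Pi.single_eq_of_ne hst 1
      rw [h0, map_zero]
  | algebraMap r =>
      rw [DopS_eq]
      exact contractLeft_algebraMap _ _ r
  | add x y hx hy ihx ihy => rw [map_add, ihx, ihy, add_zero]
  | mul x y hx hy ihx ihy => rw [Dop_mul, ihx, ihy, zero_mul, mul_zero, add_zero]

lemma parity_sign {w : GS S} (h : IsEvenOrOdd S w) :
    ∃ ε : ℂ, ε * ε = 1 ∧ involute w = ε • w := by
  rcases h with h | h
  · exact ⟨1, by norm_num, by rw [involute_eq_of_mem_even h, one_smul]⟩
  · exact ⟨-1, by norm_num, by rw [involute_eq_of_mem_odd h, neg_smul, one_smul]⟩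

lemma Xop_mul (s : S) (x y : GS S) : XopS S s (x * y) = XopS S s x * y := by
  rw [XopS_apply, XopS_apply, mul_assoc]

lemma mul_Xop {w : GS S} {ε : ℂ} (hw : involute w = ε • w) (s : S) (y : GS S) :
    XopS S s (w * y) = ε • (w * XopS S s y) := by
  rw [XopS_apply, XopS_apply, ← mul_assoc, iota_mul_comm, hw, smul_mul_assoc, smul_mul_assoc, mul_assoc]

lemma key_anti (F : Finset S) (β γ : S → ℂ) (t : S) (hF : ∀ s ∈ F, s ≠ t) (a : GS S) :
    (∑ s ∈ F, (β s • DopS S s + γ s • XopS S s)) (DopS S t a)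
      = -(DopS S t ((∑ s ∈ F, (β s • DopS S s + γ s • XopS S s)) a)) := by
  simp only [LinearMap.sum_apply, LinearMap.add_apply, LinearMap.smul_apply, map_sum,
    ← Finset.sum_neg_distrib]
  refine Finset.sum_congr rfl fun s hs => ?_
  rw [Dop_Dop, Dop_Xop s t (hF s hs), map_add, map_smul, map_smul, smul_neg, smul_neg, neg_add]


lemma sum5_apply (x₁ x₂ x₃ x₄ x₅ : S) (f : S → (GS S →ₗ[ℂ] GS S)) (a : GS S)
    (h₁ : x₁ ∉ ({x₂, x₃, x₄, x₅} : Finset S)) (h₂ : x₂ ∉ ({x₃, x₄, x₅} : Finset S))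
    (h₃ : x₃ ∉ ({x₄, x₅} : Finset S)) (h₄ : x₄ ∉ ({x₅} : Finset S)) :
    (∑ s ∈ ({x₁, x₂, x₃, x₄, x₅} : Finset S), f s) a
      = f x₁ a + f x₂ a + f x₃ a + f x₄ a + f x₅ a := by
  rw [Finset.sum_insert h₁, Finset.sum_insert h₂, Finset.sum_insert h₃, Finset.sum_insert h₄,
    Finset.sum_singleton]
  simp only [LinearMap.add_apply]
  abel

lemma sum3_apply (x₁ x₂ x₃ : S) (f : S → (GS S →ₗ[ℂ] GS S)) (a : GS S)
    (h₁ : x₁ ∉ ({x₂, x₃} : Finset S)) (h₂ : x₂ ∉ ({x₃} : Finset S)) :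
    (∑ s ∈ ({x₁, x₂, x₃} : Finset S), f s) a = f x₁ a + f x₂ a + f x₃ a := by
  rw [Finset.sum_insert h₁, Finset.sum_insert h₂, Finset.sum_singleton]
  simp only [LinearMap.add_apply]
  abel

end Pach33

set_option maxHeartbeats 2000000

/-- composition of the three 4-simplex operators in the left-hand side of
the Pachner move 3–3.  With the agreement conditions on the inner tetrahedra
`1234, 1235, 1236`, the composed operator `d` over the nine boundary tetrahedra
satisfies `d(W₁W₂W₃) = −(β¹₁₂₃₄∂₁₂₃₄ + β¹₁₂₃₅∂₁₂₃₅ + β²₁₂₃₆∂₁₂₃₆)(W₁W₂W₃)` and hence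
annihilates the triple Berezin integral of `W₁W₂W₃` over the three inner variables. -/
theorem composed_operator_pachner33_lhs
    (S₁ S₂ S₃ : Finset (Finset (Fin 6)))
    (hS₁ : S₁ = {({1,2,3,4} : Finset (Fin 6)), {0,2,3,4}, {0,1,3,4}, {0,1,2,4}, {0,1,2,3}})
    (hS₂ : S₂ = {({1,2,3,5} : Finset (Fin 6)), {0,2,3,5}, {0,1,3,5}, {0,1,2,5}, {0,1,2,3}})
    (hS₃ : S₃ = {({1,2,4,5} : Finset (Fin 6)), {0,2,4,5}, {0,1,4,5}, {0,1,2,5}, {0,1,2,4}})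
    (W₁ W₂ W₃ : GS (Finset (Fin 6)))
    (hW₁ : W₁ ∈ GSub _ S₁) (hW₂ : W₂ ∈ GSub _ S₂) (hW₃ : W₃ ∈ GSub _ S₃)
    (hp₁ : IsEvenOrOdd _ W₁) (hp₂ : IsEvenOrOdd _ W₂) (hp₃ : IsEvenOrOdd _ W₃)
    (β₁ γ₁ β₂ γ₂ β₃ γ₃ : Finset (Fin 6) → ℂ)
    (d₁ d₂ d₃ d : GS (Finset (Fin 6)) →ₗ[ℂ] GS (Finset (Fin 6)))
    (hd₁ : d₁ = ∑ s ∈ S₁, (β₁ s • DopS _ s + γ₁ s • XopS _ s))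
    (hd₂ : d₂ = ∑ s ∈ S₂, (β₂ s • DopS _ s + γ₂ s • XopS _ s))
    (hd₃ : d₃ = ∑ s ∈ S₃, (β₃ s • DopS _ s + γ₃ s • XopS _ s))
    (hann₁ : d₁ W₁ = 0) (hann₂ : d₂ W₂ = 0) (hann₃ : d₃ W₃ = 0)
    -- agreement conditions on the inner tetrahedra 1234, 1235, 1236
    (hag₁β : β₁ {0,1,2,3} = β₂ {0,1,2,3}) (hag₁γ : γ₁ {0,1,2,3} = -γ₂ {0,1,2,3})
    (hag₂β : β₁ {0,1,2,4} = β₃ {0,1,2,4}) (hag₂γ : γ₁ {0,1,2,4} = -γ₃ {0,1,2,4})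
    (hag₃β : β₂ {0,1,2,5} = β₃ {0,1,2,5}) (hag₃γ : γ₂ {0,1,2,5} = -γ₃ {0,1,2,5})
    -- the composed operator over the nine boundary tetrahedra
    (hd : d = ∑ s ∈ S₁ \ {({0,1,2,3} : Finset (Fin 6)), {0,1,2,4}},
          (β₁ s • DopS _ s + γ₁ s • XopS _ s)
        + ∑ s ∈ S₂ \ {({0,1,2,3} : Finset (Fin 6)), {0,1,2,5}},
          (β₂ s • DopS _ s + γ₂ s • XopS _ s)
        + ∑ s ∈ S₃ \ {({0,1,2,4} : Finset (Fin 6)), {0,1,2,5}},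
          (β₃ s • DopS _ s + γ₃ s • XopS _ s)) :
    d (W₁ * W₂ * W₃) =
      -(β₁ {0,1,2,3} • DopS _ {0,1,2,3} (W₁ * W₂ * W₃)
        + β₁ {0,1,2,4} • DopS _ {0,1,2,4} (W₁ * W₂ * W₃)
        + β₂ {0,1,2,5} • DopS _ {0,1,2,5} (W₁ * W₂ * W₃)) ∧
    d (DopS _ {0,1,2,5} (DopS _ {0,1,2,4} (DopS _ {0,1,2,3} (W₁ * W₂ * W₃)))) = 0 := by
  
  subst hS₁ hS₂ hS₃
  obtain ⟨ε₁, hε₁, hι₁⟩ := Pach33.parity_sign hp₁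
  obtain ⟨ε₂, hε₂, hι₂⟩ := Pach33.parity_sign hp₂
  have z1 : ∀ s : Finset (Fin 6),
      s ∉ ({({1,2,3,4} : Finset (Fin 6)), {0,2,3,4}, {0,1,3,4}, {0,1,2,4}, {0,1,2,3}} :
        Finset (Finset (Fin 6))) → DopS _ s W₁ = 0 := fun s hs => Pach33.Dop_support hW₁ hs
  have z2 : ∀ s : Finset (Fin 6),
      s ∉ ({({1,2,3,5} : Finset (Fin 6)), {0,2,3,5}, {0,1,3,5}, {0,1,2,5}, {0,1,2,3}} :
        Finset (Finset (Fin 6))) → DopS _ s W₂ = 0 := fun s hs => Pach33.Dop_support hW₂ hs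
  have z3 : ∀ s : Finset (Fin 6),
      s ∉ ({({1,2,4,5} : Finset (Fin 6)), {0,2,4,5}, {0,1,4,5}, {0,1,2,5}, {0,1,2,4}} :
        Finset (Finset (Fin 6))) → DopS _ s W₃ = 0 := fun s hs => Pach33.Dop_support hW₃ hs
  -- product formulas for the three kinds of boundary tetrahedra
  have hD1 : ∀ s : Finset (Fin 6), DopS _ s W₂ = 0 → DopS _ s W₃ = 0 →
      DopS _ s (W₁ * W₂ * W₃) = DopS _ s W₁ * (W₂ * W₃) := by
    intro s h2 h3
    simp only [Pach33.Dop_mul, h2, h3, mul_zero, zero_mul, add_zero, zero_add, mul_assoc]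
  have hD2 : ∀ s : Finset (Fin 6), DopS _ s W₁ = 0 → DopS _ s W₃ = 0 →
      DopS _ s (W₁ * W₂ * W₃) = ε₁ • (W₁ * (DopS _ s W₂ * W₃)) := by
    intro s h1 h3
    simp only [Pach33.Dop_mul, h1, h3, hι₁, mul_zero, add_zero, zero_mul, zero_add,
      smul_mul_assoc, mul_assoc, smul_zero]
  have hD3 : ∀ s : Finset (Fin 6), DopS _ s W₁ = 0 → DopS _ s W₂ = 0 →
      DopS _ s (W₁ * W₂ * W₃) = (ε₁ * ε₂) • (W₁ * (W₂ * DopS _ s W₃)) := by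
    intro s h1 h2
    simp only [Pach33.Dop_mul, h1, h2, map_mul, hι₁, hι₂, mul_zero, add_zero, zero_mul,
      zero_add, smul_mul_assoc, mul_smul_comm, mul_assoc, smul_zero, mul_add, smul_add, add_mul]
    module
  have hDt1 : DopS _ {0,1,2,3} (W₁ * W₂ * W₃)
      = DopS _ {0,1,2,3} W₁ * (W₂ * W₃) + ε₁ • (W₁ * (DopS _ {0,1,2,3} W₂ * W₃)) := by
    simp only [Pach33.Dop_mul, z3 {0,1,2,3} (by decide), hι₁, mul_zero, zero_mul, add_zero,
      zero_add, add_mul, smul_mul_assoc, mul_assoc]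
  have hDt2 : DopS _ {0,1,2,4} (W₁ * W₂ * W₃)
      = DopS _ {0,1,2,4} W₁ * (W₂ * W₃)
        + (ε₁ * ε₂) • (W₁ * (W₂ * DopS _ {0,1,2,4} W₃)) := by
    simp only [Pach33.Dop_mul, z2 {0,1,2,4} (by decide), hι₁, hι₂, map_mul, mul_zero,
      zero_mul, add_zero, zero_add, add_mul, mul_add, smul_add, smul_mul_assoc, mul_smul_comm,
      mul_assoc]
    module
  have hDt3 : DopS _ {0,1,2,5} (W₁ * W₂ * W₃)
      = ε₁ • (W₁ * (DopS _ {0,1,2,5} W₂ * W₃))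
        + (ε₁ * ε₂) • (W₁ * (W₂ * DopS _ {0,1,2,5} W₃)) := by
    simp only [Pach33.Dop_mul, z1 {0,1,2,5} (by decide), hι₁, hι₂, map_mul, zero_mul,
      mul_zero, add_zero, zero_add, add_mul, mul_add, smul_add, smul_mul_assoc, mul_smul_comm,
      mul_assoc]
    module
  -- product formulas for exterior multiplication operators
  have hX1 : ∀ s : Finset (Fin 6),
      XopS _ s (W₁ * W₂ * W₃) = XopS _ s W₁ * (W₂ * W₃) := by
    intro s
    rw [Pach33.Xop_mul, Pach33.Xop_mul, mul_assoc]
  have hX2 : ∀ s : Finset (Fin 6),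
      XopS _ s (W₁ * W₂ * W₃) = ε₁ • (W₁ * (XopS _ s W₂ * W₃)) := by
    intro s
    rw [mul_assoc, Pach33.mul_Xop hι₁, Pach33.Xop_mul]
  have hX3 : ∀ s : Finset (Fin 6),
      XopS _ s (W₁ * W₂ * W₃) = (ε₁ * ε₂) • (W₁ * (W₂ * XopS _ s W₃)) := by
    intro s
    rw [mul_assoc, Pach33.mul_Xop hι₁, Pach33.mul_Xop hι₂, mul_smul_comm, smul_smul]
  have hR1 : XopS _ {0,1,2,3} W₁ * (W₂ * W₃)
      = ε₁ • (W₁ * (XopS _ {0,1,2,3} W₂ * W₃)) := (hX1 {0,1,2,3}).symm.trans (hX2 {0,1,2,3})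
  have hR2 : XopS _ {0,1,2,4} W₁ * (W₂ * W₃)
      = (ε₁ * ε₂) • (W₁ * (W₂ * XopS _ {0,1,2,4} W₃)) :=
    (hX1 {0,1,2,4}).symm.trans (hX3 {0,1,2,4})
  have hR3 : W₁ * (XopS _ {0,1,2,5} W₂ * W₃)
      = ε₂ • (W₁ * (W₂ * XopS _ {0,1,2,5} W₃)) := by
    have h4 := congrArg (fun z : GS (Finset (Fin 6)) => ε₁ • z) (hX2 {0,1,2,5})
    rw [smul_smul, hε₁, one_smul] at h4
    rw [← h4, hX3 {0,1,2,5}, smul_smul, ← mul_assoc, hε₁, one_mul]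
  -- instantiated product formulas
  have eA₁ := hD1 {1,2,3,4} (z2 {1,2,3,4} (by decide)) (z3 {1,2,3,4} (by decide))
  have eA₂ := hD1 {0,2,3,4} (z2 {0,2,3,4} (by decide)) (z3 {0,2,3,4} (by decide))
  have eA₃ := hD1 {0,1,3,4} (z2 {0,1,3,4} (by decide)) (z3 {0,1,3,4} (by decide))
  have eB₁ := hD2 {1,2,3,5} (z1 {1,2,3,5} (by decide)) (z3 {1,2,3,5} (by decide))
  have eB₂ := hD2 {0,2,3,5} (z1 {0,2,3,5} (by decide)) (z3 {0,2,3,5} (by decide))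
  have eB₃ := hD2 {0,1,3,5} (z1 {0,1,3,5} (by decide)) (z3 {0,1,3,5} (by decide))
  have eC₁ := hD3 {1,2,4,5} (z1 {1,2,4,5} (by decide)) (z2 {1,2,4,5} (by decide))
  have eC₂ := hD3 {0,2,4,5} (z1 {0,2,4,5} (by decide)) (z2 {0,2,4,5} (by decide))
  have eC₃ := hD3 {0,1,4,5} (z1 {0,1,4,5} (by decide)) (z2 {0,1,4,5} (by decide))
  have fA₁ := hX1 {1,2,3,4}
  have fA₂ := hX1 {0,2,3,4}
  have fA₃ := hX1 {0,1,3,4}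
  have fB₁ := hX2 {1,2,3,5}
  have fB₂ := hX2 {0,2,3,5}
  have fB₃ := hX2 {0,1,3,5}
  have fC₁ := hX3 {1,2,4,5}
  have fC₂ := hX3 {0,2,4,5}
  have fC₃ := hX3 {0,1,4,5}
  -- expand the annihilation conditions
  rw [hd₁, Pach33.sum5_apply {1,2,3,4} {0,2,3,4} {0,1,3,4} {0,1,2,4} {0,1,2,3} _ W₁
    (by decide) (by decide) (by decide) (by decide)] at hann₁
  simp only [LinearMap.add_apply, LinearMap.smul_apply] at hann₁
  rw [hd₂, Pach33.sum5_apply {1,2,3,5} {0,2,3,5} {0,1,3,5} {0,1,2,5} {0,1,2,3} _ W₂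
    (by decide) (by decide) (by decide) (by decide)] at hann₂
  simp only [LinearMap.add_apply, LinearMap.smul_apply] at hann₂
  rw [hd₃, Pach33.sum5_apply {1,2,4,5} {0,2,4,5} {0,1,4,5} {0,1,2,5} {0,1,2,4} _ W₃
    (by decide) (by decide) (by decide) (by decide)] at hann₃
  simp only [LinearMap.add_apply, LinearMap.smul_apply] at hann₃
  have hG₁ := congrArg (· * (W₂ * W₃)) hann₁
  simp only [add_mul, smul_mul_assoc, zero_mul] at hG₁
  have hG₂ := congrArg (fun z => W₁ * (z * W₃)) hann₂
  simp only [add_mul, smul_mul_assoc, mul_add, mul_smul_comm, mul_zero, zero_mul] at hG₂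
  have hG₃ := congrArg (fun z => W₁ * (W₂ * z)) hann₃
  simp only [mul_add, mul_smul_comm, mul_zero] at hG₃
  rw [hag₁β, hag₂β, hag₁γ, hag₂γ, hR1, hR2] at hG₁
  rw [hag₃β, hag₃γ, hR3] at hG₂
  -- the three boundary pieces of `d`
  have hsd₁ : ({({1,2,3,4} : Finset (Fin 6)), {0,2,3,4}, {0,1,3,4}, {0,1,2,4}, {0,1,2,3}} :
      Finset (Finset (Fin 6))) \ {({0,1,2,3} : Finset (Fin 6)), {0,1,2,4}}
      = ({({1,2,3,4} : Finset (Fin 6)), {0,2,3,4}, {0,1,3,4}} : Finset (Finset (Fin 6))) := by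
    decide
  have hsd₂ : ({({1,2,3,5} : Finset (Fin 6)), {0,2,3,5}, {0,1,3,5}, {0,1,2,5}, {0,1,2,3}} :
      Finset (Finset (Fin 6))) \ {({0,1,2,3} : Finset (Fin 6)), {0,1,2,5}}
      = ({({1,2,3,5} : Finset (Fin 6)), {0,2,3,5}, {0,1,3,5}} : Finset (Finset (Fin 6))) := by
    decide
  have hsd₃ : ({({1,2,4,5} : Finset (Fin 6)), {0,2,4,5}, {0,1,4,5}, {0,1,2,5}, {0,1,2,4}} :
      Finset (Finset (Fin 6))) \ {({0,1,2,4} : Finset (Fin 6)), {0,1,2,5}}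
      = ({({1,2,4,5} : Finset (Fin 6)), {0,2,4,5}, {0,1,4,5}} : Finset (Finset (Fin 6))) := by
    decide
  have main₁ : d (W₁ * W₂ * W₃) =
      -(β₁ {0,1,2,3} • DopS _ {0,1,2,3} (W₁ * W₂ * W₃)
        + β₁ {0,1,2,4} • DopS _ {0,1,2,4} (W₁ * W₂ * W₃)
        + β₂ {0,1,2,5} • DopS _ {0,1,2,5} (W₁ * W₂ * W₃)) := by
    rw [hd, hsd₁, hsd₂, hsd₃]
    simp only [LinearMap.add_apply]
    rw [Pach33.sum3_apply {1,2,3,4} {0,2,3,4} {0,1,3,4} _ (W₁ * W₂ * W₃)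
      (by decide) (by decide)]
    rw [Pach33.sum3_apply {1,2,3,5} {0,2,3,5} {0,1,3,5} _ (W₁ * W₂ * W₃)
      (by decide) (by decide)]
    rw [Pach33.sum3_apply {1,2,4,5} {0,2,4,5} {0,1,4,5} _ (W₁ * W₂ * W₃)
      (by decide) (by decide)]
    simp only [LinearMap.add_apply, LinearMap.smul_apply]
    rw [eA₁, eA₂, eA₃, eB₁, eB₂, eB₃, eC₁, eC₂, eC₃, fA₁, fA₂, fA₃, fB₁, fB₂, fB₃,
      fC₁, fC₂, fC₃, hDt1, hDt2, hDt3, hag₁β, hag₂β, hag₃β]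
    linear_combination (norm := module) hG₁ + ε₁ • hG₂ + (ε₁ * ε₂) • hG₃
  refine ⟨main₁, ?_⟩
  have hanti : ∀ t : Finset (Fin 6),
      (∀ s ∈ ({({1,2,3,4} : Finset (Fin 6)), {0,2,3,4}, {0,1,3,4}} :
        Finset (Finset (Fin 6))), s ≠ t) →
      (∀ s ∈ ({({1,2,3,5} : Finset (Fin 6)), {0,2,3,5}, {0,1,3,5}} :
        Finset (Finset (Fin 6))), s ≠ t) →
      (∀ s ∈ ({({1,2,4,5} : Finset (Fin 6)), {0,2,4,5}, {0,1,4,5}} :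
        Finset (Finset (Fin 6))), s ≠ t) →
      ∀ a, d (DopS _ t a) = -(DopS _ t (d a)) := by
    intro t h1 h2 h3 a
    rw [hd, hsd₁, hsd₂, hsd₃]
    simp only [LinearMap.add_apply]
    rw [Pach33.key_anti _ β₁ γ₁ t h1, Pach33.key_anti _ β₂ γ₂ t h2,
      Pach33.key_anti _ β₃ γ₃ t h3]
    simp only [map_add, neg_add]
  have k₁ : DopS _ {0,1,2,5} (DopS _ {0,1,2,4} (DopS _ {0,1,2,3}
      (DopS _ {0,1,2,3} (W₁ * W₂ * W₃)))) = 0 := by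
    rw [Pach33.Dop_Dop_self, map_zero, map_zero]
  have k₂ : DopS _ {0,1,2,5} (DopS _ {0,1,2,4} (DopS _ {0,1,2,3}
      (DopS _ {0,1,2,4} (W₁ * W₂ * W₃)))) = 0 := by
    rw [Pach33.Dop_Dop {0,1,2,3} {0,1,2,4}]
    simp only [map_neg, Pach33.Dop_Dop_self, map_zero, neg_zero]
  have k₃ : DopS _ {0,1,2,5} (DopS _ {0,1,2,4} (DopS _ {0,1,2,3}
      (DopS _ {0,1,2,5} (W₁ * W₂ * W₃)))) = 0 := by
    rw [Pach33.Dop_Dop {0,1,2,3} {0,1,2,5}]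
    simp only [map_neg]
    rw [Pach33.Dop_Dop {0,1,2,4} {0,1,2,5}]
    simp only [map_neg, Pach33.Dop_Dop_self, map_zero, neg_zero]
  rw [hanti {0,1,2,5} (by decide) (by decide) (by decide),
    hanti {0,1,2,4} (by decide) (by decide) (by decide),
    hanti {0,1,2,3} (by decide) (by decide) (by decide), main₁]
  simp only [map_neg, neg_neg, map_add, map_smul, k₁, k₂, k₃, smul_zero, add_zero,
    neg_zero, zero_add]
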